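/- arXiv:2410.02336 — 2 statements merged into one kernel-verified Lean document; each statement's English description precedes it below -/
import Mathlib

section
/- For any two finite simple graphs G and H, the strong product satisfies χ_so(G ⊠ H) ≤ χ_so(G) · χ_so(H). -/
/-- A strong odd coloring of a simple graph: a proper vertex coloring such that for every
vertex `v` and every color `c`, the number of neighbors of `v` colored `c` is zero or odd. -/
def SimpleGraph.IsStrongOddColoring {V α : Type*} (G : SimpleGraph V) (φ : V → α) : Prop :=
  (∀ ⦃u v⦄, G.Adj u v → φ u ≠ φ v) ∧
    ∀ v c, Nat.card {u // G.Adj v u ∧ φ u = c} = 0 ∨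
      Odd (Nat.card {u // G.Adj v u ∧ φ u = c})

/-- The strong odd chromatic number: the least `k` such that there is a strong odd
coloring using `k` colors. -/
noncomputable def SimpleGraph.strongOddChromaticNumber {V : Type*} (G : SimpleGraph V) : ℕ :=
  sInf {k | ∃ φ : V → Fin k, G.IsStrongOddColoring φ}

/-- The strong product of two simple graphs. -/
def SimpleGraph.strongProd {α β : Type*} (G : SimpleGraph α) (H : SimpleGraph β) :
    SimpleGraph (α × β) where
  Adj x y := x ≠ y ∧ (x.1 = y.1 ∨ G.Adj x.1 y.1) ∧ (x.2 = y.2 ∨ H.Adj x.2 y.2)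
  symm := by
    constructor
    rintro x y ⟨hne, h1, h2⟩
    exact ⟨hne.symm, h1.imp Eq.symm (fun h => h.symm), h2.imp Eq.symm (fun h => h.symm)⟩
  loopless := by constructor; rintro x ⟨hne, -, -⟩; exact hne rfl

/-- An injective coloring is a strong odd coloring. -/
lemma inj_strong_odd {V γ : Type*} (G : SimpleGraph V) {φ : V → γ}
    (hφ : Function.Injective φ) : G.IsStrongOddColoring φ := by
  refine ⟨fun u v huv he => G.ne_of_adj huv (hφ he), fun v c => ?_⟩
  haveI hs : Subsingleton {u // G.Adj v u ∧ φ u = c} :=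
    ⟨fun ⟨u, _, hu⟩ ⟨w, _, hw⟩ => Subtype.ext (hφ (hu.trans hw.symm))⟩
  rcases isEmpty_or_nonempty {u // G.Adj v u ∧ φ u = c} with he | hn
  · exact Or.inl Nat.card_of_isEmpty
  · right
    rw [Nat.card_unique (α := {u // G.Adj v u ∧ φ u = c})]
    exact odd_one

/-- Postcomposing a strong odd coloring with an injection gives a strong odd coloring. -/
lemma comp_strong_odd {V γ δ : Type*} {G : SimpleGraph V} {φ : V → γ} {f : γ → δ}
    (hf : Function.Injective f) (h : G.IsStrongOddColoring φ) :
    G.IsStrongOddColoring (f ∘ φ) := by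
  refine ⟨fun u v huv he => h.1 huv (hf he), fun v c => ?_⟩
  by_cases hc : ∃ c', f c' = c
  · obtain ⟨c', rfl⟩ := hc
    have he : Nat.card {u // G.Adj v u ∧ (f ∘ φ) u = f c'}
        = Nat.card {u // G.Adj v u ∧ φ u = c'} :=
      Nat.card_congr (Equiv.subtypeEquivRight (fun u => by simp [hf.eq_iff]))
    rw [he]; exact h.2 v c'
  · left
    have : IsEmpty {u // G.Adj v u ∧ (f ∘ φ) u = c} :=
      ⟨fun ⟨u, _, he⟩ => hc ⟨φ u, he⟩⟩
    exact Nat.card_of_isEmpty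

/-- The product of strong odd colorings is a strong odd coloring of the strong product. -/
lemma prod_strong_odd {α β γ δ : Type*} {G : SimpleGraph α} {H : SimpleGraph β}
    {φ : α → γ} {ψ : β → δ} (hφ : G.IsStrongOddColoring φ) (hψ : H.IsStrongOddColoring ψ) :
    (G.strongProd H).IsStrongOddColoring (fun p => (φ p.1, ψ p.2)) := by
  constructor
  · rintro ⟨g, h⟩ ⟨g', h'⟩ ⟨hne, h1, h2⟩ heq
    have e1 : φ g = φ g' := congrArg Prod.fst heq
    have e2 : ψ h = ψ h' := congrArg Prod.snd heq
    have hg : g = g' := h1.resolve_right (fun ha => hφ.1 ha e1)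
    have hh : h = h' := h2.resolve_right (fun ha => hψ.1 ha e2)
    exact hne (Prod.ext hg hh)
  · rintro ⟨g, h⟩ ⟨c₁, c₂⟩
    by_cases hc₁ : φ g = c₁ <;> by_cases hc₂ : ψ h = c₂
    · -- both colors match the vertex: the set is empty
      left
      have : IsEmpty {u // (G.strongProd H).Adj (g, h) u ∧
          (fun p => (φ p.1, ψ p.2)) u = (c₁, c₂)} := by
        refine ⟨fun ⟨⟨u, w⟩, ⟨hne, h1, h2⟩, he⟩ => ?_⟩
        have e1 : φ u = c₁ := congrArg Prod.fst he
        have e2 : ψ w = c₂ := congrArg Prod.snd he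
        have hu : g = u := h1.resolve_right (fun ha => hφ.1 ha (hc₁.trans e1.symm))
        have hw : h = w := h2.resolve_right (fun ha => hψ.1 ha (hc₂.trans e2.symm))
        exact hne (Prod.ext hu.symm hw.symm).symm
      exact Nat.card_of_isEmpty
    · -- φ g = c₁, ψ h ≠ c₂: bijection with H-neighbors of h colored c₂
      have he : Nat.card {u // (G.strongProd H).Adj (g, h) u ∧
          (fun p => (φ p.1, ψ p.2)) u = (c₁, c₂)} = Nat.card {w // H.Adj h w ∧ ψ w = c₂} := by
        apply Nat.card_congr
        refine ⟨fun ⟨⟨u, w⟩, ⟨hne, h1, h2⟩, he⟩ => ⟨w, ?_, congrArg Prod.snd he⟩,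
          fun ⟨w, ha, hw⟩ => ⟨(g, w), ⟨?_, Or.inl rfl, Or.inr ha⟩, ?_⟩, ?_, ?_⟩
        · have e2 : ψ w = c₂ := congrArg Prod.snd he
          exact h2.resolve_left (fun hh => hc₂ ((show h = w from hh) ▸ e2))
        · exact fun hee => H.ne_of_adj ha (show h = w from congrArg Prod.snd hee)
        · exact Prod.ext hc₁ hw
        · rintro ⟨⟨u, w⟩, ⟨hne, h1, h2⟩, he⟩
          have e1 : φ u = c₁ := congrArg Prod.fst he
          have hu : g = u := h1.resolve_right (fun ha => hφ.1 ha (hc₁.trans e1.symm))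
          exact Subtype.ext (Prod.ext hu rfl)
        · rintro ⟨w, ha, hw⟩; rfl
      rw [he]; exact hψ.2 h c₂
    · -- ψ h = c₂, φ g ≠ c₁: bijection with G-neighbors of g colored c₁
      have he : Nat.card {u // (G.strongProd H).Adj (g, h) u ∧
          (fun p => (φ p.1, ψ p.2)) u = (c₁, c₂)} = Nat.card {u // G.Adj g u ∧ φ u = c₁} := by
        apply Nat.card_congr
        refine ⟨fun ⟨⟨u, w⟩, ⟨hne, h1, h2⟩, he⟩ => ⟨u, ?_, congrArg Prod.fst he⟩,
          fun ⟨u, ha, hu⟩ => ⟨(u, h), ⟨?_, Or.inr ha, Or.inl rfl⟩, ?_⟩, ?_, ?_⟩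
        · have e1 : φ u = c₁ := congrArg Prod.fst he
          exact h1.resolve_left (fun hh => hc₁ ((show g = u from hh) ▸ e1))
        · exact fun hee => G.ne_of_adj ha (show g = u from congrArg Prod.fst hee)
        · exact Prod.ext hu hc₂
        · rintro ⟨⟨u, w⟩, ⟨hne, h1, h2⟩, he⟩
          have e2 : ψ w = c₂ := congrArg Prod.snd he
          have hw : h = w := h2.resolve_right (fun ha => hψ.1 ha (hc₂.trans e2.symm))
          exact Subtype.ext (Prod.ext rfl hw)
        · rintro ⟨u, ha, hu⟩; rfl
      rw [he]; exact hφ.2 g c₁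
    · -- neither: bijection with the product of neighbor sets
      have he : Nat.card {u // (G.strongProd H).Adj (g, h) u ∧
          (fun p => (φ p.1, ψ p.2)) u = (c₁, c₂)}
          = Nat.card ({u // G.Adj g u ∧ φ u = c₁} × {w // H.Adj h w ∧ ψ w = c₂}) := by
        apply Nat.card_congr
        refine ⟨fun ⟨⟨u, w⟩, ⟨hne, h1, h2⟩, he⟩ =>
            (⟨u, ?_, congrArg Prod.fst he⟩, ⟨w, ?_, congrArg Prod.snd he⟩),
          fun ⟨⟨u, hau, hu⟩, ⟨w, haw, hw⟩⟩ =>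
            ⟨(u, w), ⟨?_, Or.inr hau, Or.inr haw⟩, Prod.ext hu hw⟩, ?_, ?_⟩
        · have e1 : φ u = c₁ := congrArg Prod.fst he
          exact h1.resolve_left (fun hh => hc₁ ((show g = u from hh) ▸ e1))
        · have e2 : ψ w = c₂ := congrArg Prod.snd he
          exact h2.resolve_left (fun hh => hc₂ ((show h = w from hh) ▸ e2))
        · exact fun hee => G.ne_of_adj hau (show g = u from congrArg Prod.fst hee)
        · rintro ⟨⟨u, w⟩, ⟨hne, h1, h2⟩, he⟩; rfl
        · rintro ⟨⟨u, hau, hu⟩, ⟨w, haw, hw⟩⟩; rfl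
      rw [he, Nat.card_prod]
      rcases hφ.2 g c₁ with h1 | h1
      · left; rw [h1, zero_mul]
      · rcases hψ.2 h c₂ with h2 | h2
        · left; rw [h2, mul_zero]
        · exact Or.inr (h1.mul h2)

/-- `χ_so(G ⊠ H) ≤ χ_so(G) · χ_so(H)` for the strong product. -/
theorem strongOddChromaticNumber_strongProd_le {α β : Type*} [Fintype α] [Fintype β]
    (G : SimpleGraph α) (H : SimpleGraph β) :
    (G.strongProd H).strongOddChromaticNumber ≤
      G.strongOddChromaticNumber * H.strongOddChromaticNumber := by
  classical
  have hGne : {k | ∃ φ : α → Fin k, G.IsStrongOddColoring φ}.Nonempty :=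
    ⟨Fintype.card α, Fintype.equivFin α, inj_strong_odd G (Fintype.equivFin α).injective⟩
  have hHne : {k | ∃ φ : β → Fin k, H.IsStrongOddColoring φ}.Nonempty :=
    ⟨Fintype.card β, Fintype.equivFin β, inj_strong_odd H (Fintype.equivFin β).injective⟩
  obtain ⟨φ, hφ⟩ := Nat.sInf_mem hGne
  obtain ⟨ψ, hψ⟩ := Nat.sInf_mem hHne
  set k := G.strongOddChromaticNumber
  set l := H.strongOddChromaticNumber
  have hprod := prod_strong_odd hφ hψ
  have e : Fin k × Fin l ≃ Fin (k * l) :=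
    Fintype.equivFinOfCardEq (by simp)
  have := comp_strong_odd e.injective hprod
  exact Nat.sInf_le ⟨e ∘ fun p => (φ p.1, ψ p.2), this⟩
end

section
/- For every finite simple graph G on n = (2k+1)^2 vertices (k ≥ 1 an integer), the sum of strong odd chromatic numbers of G and its complement satisfies 2√n ≤ χ_so(G) + χ_so(complement of G) ≤ 2n, i.e., 2(2k+1) ≤ χ_so(G) + χ_so(Ḡ) ≤ 2(2k+1)^2. -/
lemma exists_strong_odd_coloring_card {V : Type*} [Fintype V] (G : SimpleGraph V) :
    ∃ φ : V → Fin (Fintype.card V), G.IsStrongOddColoring φ := by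
  classical
  obtain ⟨e⟩ := Fintype.truncEquivFin V
  refine ⟨e, fun u v h hne => (G.ne_of_adj h) (e.injective hne), fun v c => ?_⟩
  by_cases h : ∃ u, G.Adj v u ∧ e u = c
  · right
    have h1 : Nat.card {u // G.Adj v u ∧ e u = c} = 1 := by
      rw [Nat.card_eq_one_iff_unique]
      constructor
      · constructor
        intro ⟨u1, h1⟩ ⟨u2, h2⟩
        have : u1 = u2 := e.injective (h1.2.trans h2.2.symm)
        simp [this]
      · obtain ⟨u, hu⟩ := h
        exact ⟨⟨u, hu⟩⟩
    rw [h1]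
    exact odd_one
  · left
    have : IsEmpty {u // G.Adj v u ∧ e u = c} := ⟨fun ⟨u, hu⟩ => h ⟨u, hu⟩⟩
    exact Nat.card_of_isEmpty

lemma card_le_mul_of_colorings {V : Type*} [Fintype V] (G : SimpleGraph V) {a b : ℕ}
    (φ : V → Fin a) (hφ : G.IsStrongOddColoring φ)
    (ψ : V → Fin b) (hψ : Gᶜ.IsStrongOddColoring ψ) :
    Fintype.card V ≤ a * b := by
  have hinj : Function.Injective (fun v => (φ v, ψ v)) := by
    intro u v h
    by_contra hne
    simp only [Prod.mk.injEq] at h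
    by_cases hadj : G.Adj u v
    · exact hφ.1 hadj h.1
    · exact hψ.1 ((G.compl_adj u v).2 ⟨hne, hadj⟩) h.2
  calc Fintype.card V ≤ Fintype.card (Fin a × Fin b) := Fintype.card_le_of_injective _ hinj
    _ = a * b := by simp

/-- Nordhaus--Gaddum-type bounds for the sum: for every graph `G` on `n = (2k+1)^2`
vertices, `2√n ≤ χ_so(G) + χ_so(Gᶜ) ≤ 2n`. -/
theorem strongOddChromaticNumber_add_compl_bounds {V : Type*} [Fintype V]
    (G : SimpleGraph V) (k : ℕ) (hk : 1 ≤ k) (hcard : Fintype.card V = (2 * k + 1) ^ 2) :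
    2 * (2 * k + 1) ≤ G.strongOddChromaticNumber + Gᶜ.strongOddChromaticNumber ∧
      G.strongOddChromaticNumber + Gᶜ.strongOddChromaticNumber ≤ 2 * (2 * k + 1) ^ 2 := by
  classical
  have hGmem : Fintype.card V ∈ {m | ∃ φ : V → Fin m, G.IsStrongOddColoring φ} :=
    exists_strong_odd_coloring_card G
  have hGcmem : Fintype.card V ∈ {m | ∃ φ : V → Fin m, Gᶜ.IsStrongOddColoring φ} :=
    exists_strong_odd_coloring_card Gᶜ
  have hGne : {m | ∃ φ : V → Fin m, G.IsStrongOddColoring φ}.Nonempty := ⟨_, hGmem⟩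
  have hGcne : {m | ∃ φ : V → Fin m, Gᶜ.IsStrongOddColoring φ}.Nonempty := ⟨_, hGcmem⟩
  set a := G.strongOddChromaticNumber with ha
  set b := Gᶜ.strongOddChromaticNumber with hb
  have haMem : a ∈ {m | ∃ φ : V → Fin m, G.IsStrongOddColoring φ} := Nat.sInf_mem hGne
  have hbMem : b ∈ {m | ∃ φ : V → Fin m, Gᶜ.IsStrongOddColoring φ} := Nat.sInf_mem hGcne
  obtain ⟨φ, hφ⟩ := haMem
  obtain ⟨ψ, hψ⟩ := hbMem
  have hmul : (2 * k + 1) ^ 2 ≤ a * b := by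
    rw [← hcard]; exact card_le_mul_of_colorings G φ hφ ψ hψ
  constructor
  · have hz : (2 * (2 * k + 1) : ℤ) ≤ (a : ℤ) + b := by
      have h1 : ((2 * k + 1 : ℕ) : ℤ) ^ 2 ≤ (a : ℤ) * b := by exact_mod_cast hmul
      nlinarith [sq_nonneg ((a : ℤ) - b), sq_nonneg ((a : ℤ) + b - 2 * (2 * (k : ℤ) + 1)),
        Int.natCast_nonneg a, Int.natCast_nonneg b, sq_nonneg ((a : ℤ) + b)]
    exact_mod_cast hz
  · have h1 : a ≤ (2 * k + 1) ^ 2 := hcard ▸ Nat.sInf_le hGmem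
    have h2 : b ≤ (2 * k + 1) ^ 2 := hcard ▸ Nat.sInf_le hGcmem
    omega
end
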